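/- arXiv:1311.6377 — 2 statements merged into one kernel-verified Lean document; each statement's English description precedes it below -/
import Mathlib

section
/- If p: [0,∞) → ℝ is differentiable, p(t) > 1 for all t, and p satisfies -(3C₀/2)ρ₀(p(t)-1)^{2+2n} ≤ p'(t) ≤ -(C₀/2)ρ₀(p(t)-1)^{2+2n} with p(0) ≥ 11/10, then p(t) → 1 as t → ∞, and there exists a constant C such that |p(t) - 1| ≤ C(1 + ρ₀ t)^{-1/(1+2n)} for all t ≥ 0. -/
/-! For `u = p - 1 > 0` the inequality `u' ≤ -K u ^ (1 + a)`, with `a = 1 + 2n` and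
`K = C₀ ρ₀ / 2`, says exactly that `u ^ (-a)` grows at least with slope `a K`, so
`u t ^ (-a) ≥ u 0 ^ (-a) + a K t`. Inverting gives `u t ≤ (u 0 ^ (-a) + a K t) ^ (-1 / a)`,
which is `O((1 + ρ₀ t) ^ (-1 / a))`. -/

open Real Filter Set

theorem rpow_neg_le_mul_rpow_neg {x y M b : ℝ} (hx : 0 < x) (hy : 0 < y) (hb : 0 ≤ b)
    (h : y ≤ M * x) : x ^ (-b) ≤ M ^ b * y ^ (-b) := by
  have hM : 0 < M := pos_of_mul_pos_left (hy.trans_le h) hx.le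
  rw [rpow_neg hx.le, rpow_neg hy.le, ← inv_rpow hx.le, ← inv_rpow hy.le,
    ← mul_rpow hM.le (inv_nonneg.2 hy.le)]
  refine rpow_le_rpow (inv_nonneg.2 hx.le) ?_ hb
  rwa [← div_eq_mul_inv, le_div_iff₀ hy, inv_mul_le_iff₀ hx, mul_comm]

theorem add_mul_rpow_neg_le_mul_one_add_mul_rpow_neg {x c ρ b t : ℝ} (hx : 0 < x) (hc : 0 < c)
    (hρ : 0 ≤ ρ) (hb : 0 ≤ b) (ht : 0 ≤ t) :
    (x + c * t) ^ (-b) ≤ max x⁻¹ (ρ / c) ^ b * (1 + ρ * t) ^ (-b) := by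
  refine rpow_neg_le_mul_rpow_neg (by positivity) (by positivity) hb ?_
  have hx' : 1 ≤ max x⁻¹ (ρ / c) * x := by
    simpa [inv_mul_cancel₀ hx.ne'] using
      mul_le_mul_of_nonneg_right (le_max_left x⁻¹ (ρ / c)) hx.le
  have hc' : ρ ≤ max x⁻¹ (ρ / c) * c := by
    simpa [div_mul_cancel₀ _ hc.ne'] using
      mul_le_mul_of_nonneg_right (le_max_right x⁻¹ (ρ / c)) hc.le
  linarith [mul_le_mul_of_nonneg_right hc' ht]

theorem tendsto_mul_one_add_mul_rpow_neg_atTop {C ρ b : ℝ} (hρ : 0 < ρ) (hb : 0 < b) :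
    Tendsto (fun t => C * (1 + ρ * t) ^ (-b)) atTop (nhds 0) := by
  have h := (tendsto_rpow_neg_atTop hb).comp
    (tendsto_atTop_add_const_left _ 1 (tendsto_id.const_mul_atTop hρ))
  simpa using h.const_mul C

section Decay

variable {u u' : ℝ → ℝ} {K a : ℝ}

theorem mul_le_deriv_rpow_neg_of_le {y y' : ℝ} (ha : 0 < a) (hy : 0 < y)
    (hy' : y' ≤ -K * y ^ (1 + a)) : a * K ≤ y' * (-a) * y ^ (-a - 1) := by
  have hfactor : -a * y ^ (-a - 1) ≤ 0 :=
    mul_nonpos_of_nonpos_of_nonneg (by linarith) (rpow_pos_of_pos hy _).le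
  have hcancel : y ^ (1 + a) * y ^ (-a - 1) = 1 := by
    rw [← rpow_add hy, show 1 + a + (-a - 1) = 0 by ring, rpow_zero]
  calc a * K = -K * y ^ (1 + a) * (-a * y ^ (-a - 1)) := by
        linear_combination (-(a * K)) * hcancel
    _ ≤ y' * (-a * y ^ (-a - 1)) := mul_le_mul_of_nonpos_right hy' hfactor
    _ = y' * (-a) * y ^ (-a - 1) := by ring

variable (ha : 0 < a) (hpos : ∀ t ≥ 0, 0 < u t) (hderiv : ∀ t ≥ 0, HasDerivAt u (u' t) t)
  (hle : ∀ t ≥ 0, u' t ≤ -K * u t ^ (1 + a))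
include ha hpos hderiv hle

theorem add_mul_le_rpow_neg_of_hasDerivAt_le {t : ℝ} (ht : 0 ≤ t) :
    u 0 ^ (-a) + a * K * t ≤ u t ^ (-a) := by
  have hg : ∀ s ≥ 0, HasDerivAt (fun s => u s ^ (-a) - a * K * s)
      (u' s * (-a) * u s ^ (-a - 1) - a * K) s := fun s hs =>
    ((hderiv s hs).rpow_const (p := -a) (Or.inl (hpos s hs).ne')).sub
      (((hasDerivAt_id' s).const_mul (a * K)).congr_deriv (mul_one _))
  have hmono : MonotoneOn (fun s => u s ^ (-a) - a * K * s) (Ici 0) := by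
    refine monotoneOn_of_hasDerivWithinAt_nonneg (convex_Ici 0)
      (f' := fun s => u' s * (-a) * u s ^ (-a - 1) - a * K)
      (fun s hs => (hg s hs).continuousAt.continuousWithinAt) (fun s hs => ?_) (fun s hs => ?_)
    all_goals rw [interior_Ici] at hs
    · exact (hg s hs.le).hasDerivWithinAt
    · exact sub_nonneg.2 (mul_le_deriv_rpow_neg_of_le ha (hpos s hs.le) (hle s hs.le))
  have := hmono self_mem_Ici ht ht
  simp only [mul_zero, sub_zero] at this
  linarith

theorem le_add_mul_rpow_neg_inv_of_hasDerivAt_le (hK : 0 ≤ K) {t : ℝ} (ht : 0 ≤ t) :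
    u t ≤ (u 0 ^ (-a) + a * K * t) ^ (-a⁻¹) := by
  have hu := hpos t ht
  have hbase : 0 < u 0 ^ (-a) + a * K * t := by
    have := rpow_pos_of_pos (hpos 0 le_rfl) (-a)
    positivity
  calc u t = (u t ^ (-a)) ^ (-a⁻¹) := by rw [← rpow_mul hu.le]; field_simp; simp
    _ ≤ _ := rpow_le_rpow_of_nonpos hbase
        (add_mul_le_rpow_neg_of_hasDerivAt_le ha hpos hderiv hle ht) (by simp [ha.le])

theorem exists_le_mul_one_add_mul_rpow_neg_of_hasDerivAt_le (hK : 0 < K) {ρ : ℝ}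
    (hρ : 0 ≤ ρ) :
    ∃ C > 0, ∀ t ≥ 0, u t ≤ C * (1 + ρ * t) ^ (-a⁻¹) := by
  have hx : 0 < u 0 ^ (-a) := rpow_pos_of_pos (hpos 0 le_rfl) _
  refine ⟨max (u 0 ^ (-a))⁻¹ (ρ / (a * K)) ^ a⁻¹,
    rpow_pos_of_pos (lt_max_of_lt_left (inv_pos.2 hx)) _, fun t ht => ?_⟩
  calc u t ≤ (u 0 ^ (-a) + a * K * t) ^ (-a⁻¹) :=
        le_add_mul_rpow_neg_inv_of_hasDerivAt_le ha hpos hderiv hle hK.le ht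
    _ ≤ _ := add_mul_rpow_neg_le_mul_one_add_mul_rpow_neg hx (by positivity) hρ
        (by positivity) ht

end Decay

theorem stmt3_general (p p' : ℝ → ℝ) (C₀ ρ₀ n : ℝ) (hC₀ : 0 < C₀) (hρ₀ : 0 < ρ₀) (hn : 0 < n)
    (hgt : ∀ t ≥ (0:ℝ), 1 < p t)
    (hderiv : ∀ t ≥ (0:ℝ), HasDerivAt p (p' t) t)
    (hupp : ∀ t ≥ (0:ℝ), p' t ≤ -(C₀ / 2) * ρ₀ * (p t - 1) ^ (2 + 2 * n)) :
    Tendsto p atTop (nhds 1) ∧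
      ∃ C : ℝ, 0 < C ∧ ∀ t ≥ (0:ℝ), |p t - 1| ≤ C * (1 + ρ₀ * t) ^ (-(1 / (1 + 2 * n))) := by
  have hpos : ∀ t ≥ 0, 0 < p t - 1 := fun t ht => sub_pos.2 (hgt t ht)
  obtain ⟨C, hC, hbound⟩ := exists_le_mul_one_add_mul_rpow_neg_of_hasDerivAt_le
    (u := fun t => p t - 1) (a := 1 + 2 * n) (K := C₀ / 2 * ρ₀) (by positivity) hpos
    (fun t ht => (hderiv t ht).sub_const 1)
    (fun t ht => by convert hupp t ht using 3 <;> ring) (by positivity) hρ₀.le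
  simp only [one_div]
  refine ⟨?_, C, hC, fun t ht => (abs_of_pos (hpos t ht)).trans_le (hbound t ht)⟩
  refine tendsto_sub_nhds_zero_iff.1 (squeeze_zero' ?_ ?_
    (tendsto_mul_one_add_mul_rpow_neg_atTop (C := C) (b := (1 + 2 * n)⁻¹) hρ₀ (by positivity)))
  all_goals filter_upwards [eventually_ge_atTop 0] with t ht
  exacts [(hpos t ht).le, hbound t ht]

/-- Convergence of `p(t)` to 1 with the algebraic rate `(1+ρ₀t)^{-1/(1+2n)}`. -/
theorem stmt3 (p p' : ℝ → ℝ) (C₀ ρ₀ n : ℝ) (hC₀ : 0 < C₀) (hρ₀ : 0 < ρ₀) (hn : 0 < n)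
    (hgt : ∀ t ≥ (0:ℝ), 1 < p t) (hp0 : 11 / 10 ≤ p 0)
    (hderiv : ∀ t ≥ (0:ℝ), HasDerivAt p (p' t) t)
    (hlow : ∀ t ≥ (0:ℝ), -(3 * C₀ / 2) * ρ₀ * (p t - 1) ^ (2 + 2 * n) ≤ p' t)
    (hupp : ∀ t ≥ (0:ℝ), p' t ≤ -(C₀ / 2) * ρ₀ * (p t - 1) ^ (2 + 2 * n)) :
    Tendsto p atTop (nhds 1) ∧
      ∃ C : ℝ, 0 < C ∧ ∀ t ≥ (0:ℝ), |p t - 1| ≤ C * (1 + ρ₀ * t) ^ (-(1 / (1 + 2 * n))) :=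
  stmt3_general p p' C₀ ρ₀ n hC₀ hρ₀ hn hgt hderiv hupp
end

section
/- Let a > 1, b ∈ ℝ, and let ζ₀ > 0 be the unique positive solution of √(1+ζ₀²) + ζ₀²/√(1+ζ₀²) = √(a²+b²), and set R := ζ₀/(5√(1+ζ₀²)). Assume |b|·sin R + |√(a²+b²) - a| ≤ (1/100)·ζ₀²/√(1+ζ₀²) and a ≤ 3√(1+ζ₀²). Then for all ρ ∈ [0, (6/5)ζ₀], θ ∈ [0, R], α ∈ [0,2π]: the function G(ρ,θ,α) := √(1+ρ²) - a cos θ - b sin θ cos α satisfies -G(ρ,θ,α) ≥ (1/2)·ζ₀²/√(1+ζ₀²); in particular G⁻²(ρ,θ,α) ≤ 4(1+ζ₀²)/ζ₀⁴. -/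
/-!
Write `s = √(1 + ζ₀²)` and `κ = ζ₀² / s`, so that the defining equation of `ζ₀` reads
`√(a² + b²) = s + κ`. On the region, each of the three terms of `G` is within a fixed fraction
of `κ` of its value at the critical configuration: `√(1 + ρ²) ≤ s + 11κ/50` because
`ρ² ≤ (36/25) ζ₀²`, `a cos θ ≥ a - 3κ/50` because `a ≤ 3s` and `θ ≤ ζ₀ / (5s)`, and the smallness
hypothesis gives `a ≥ s + 99κ/100` and `|b sin θ cos α| ≤ κ/100`. Hence `-G ≥ 7κ/10 ≥ κ/2`.
-/

open Real

lemma sqrt_one_add_sq_le_of_sq_le {ρ ζ c : ℝ} (hc : 0 ≤ c) (hρ : ρ ^ 2 ≤ (1 + 2 * c) * ζ ^ 2) :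
    √(1 + ρ ^ 2) ≤ √(1 + ζ ^ 2) + c * (ζ ^ 2 / √(1 + ζ ^ 2)) := by
  have hs : 0 < √(1 + ζ ^ 2) := sqrt_pos.mpr (by positivity)
  have hs2 : √(1 + ζ ^ 2) ^ 2 = 1 + ζ ^ 2 := sq_sqrt (by positivity)
  have hκ : ζ ^ 2 / √(1 + ζ ^ 2) * √(1 + ζ ^ 2) = ζ ^ 2 := div_mul_cancel₀ _ hs.ne'
  have hκ0 : 0 ≤ ζ ^ 2 / √(1 + ζ ^ 2) := by positivity
  rw [sqrt_le_left (by positivity)]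
  nlinarith [mul_nonneg hc hκ0]

lemma sub_mul_sq_div_two_le_mul_cos {a θ R : ℝ} (ha : 0 ≤ a) (hθ : |θ| ≤ R) :
    a - a * R ^ 2 / 2 ≤ a * cos θ := by
  have hθR : θ ^ 2 ≤ R ^ 2 := sq_le_sq' (abs_le.mp hθ).1 (abs_le.mp hθ).2
  nlinarith [one_sub_sq_div_two_le_cos (x := θ)]

lemma abs_mul_sin_mul_cos_le {b θ α R : ℝ} (hθ : 0 ≤ θ) (hθR : θ ≤ R) (hR : R ≤ π / 2) :
    |b * sin θ * cos α| ≤ |b| * sin R := by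
  have hsin : 0 ≤ sin θ := sin_nonneg_of_nonneg_of_le_pi hθ (by linarith [pi_pos])
  rw [abs_mul, abs_mul, abs_of_nonneg hsin]
  calc |b| * sin θ * |cos α| ≤ |b| * sin θ :=
        mul_le_of_le_one_right (by positivity) (abs_cos_le_one α)
    _ ≤ |b| * sin R :=
        mul_le_mul_of_nonneg_left (sin_le_sin_of_le_of_le_pi_div_two (by linarith) hR hθR)
          (abs_nonneg b)

lemma div_five_mul_sqrt_one_add_sq_le (ζ : ℝ) : ζ / (5 * √(1 + ζ ^ 2)) ≤ 1 / 5 := by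
  have hζ : ζ < √(1 + ζ ^ 2) := lt_sqrt_of_sq_lt (by linarith)
  rw [div_le_iff₀ (by positivity)]
  linarith

lemma mul_div_five_mul_sqrt_one_add_sq_sq_le {a ζ : ℝ} (ha : a ≤ 3 * √(1 + ζ ^ 2)) :
    a * (ζ / (5 * √(1 + ζ ^ 2))) ^ 2 / 2 ≤ 3 / 50 * (ζ ^ 2 / √(1 + ζ ^ 2)) := by
  have hs : 0 < √(1 + ζ ^ 2) := sqrt_pos.mpr (by positivity)
  calc a * (ζ / (5 * √(1 + ζ ^ 2))) ^ 2 / 2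
      ≤ 3 * √(1 + ζ ^ 2) * (ζ / (5 * √(1 + ζ ^ 2))) ^ 2 / 2 := by gcongr
    _ = 3 / 50 * (ζ ^ 2 / √(1 + ζ ^ 2)) := by field_simp; ring

lemma one_div_sq_le_of_le_neg {g c : ℝ} (hc : 0 < c) (h : c ≤ -g) : 1 / g ^ 2 ≤ 1 / c ^ 2 :=
  one_div_le_one_div_of_le (by positivity) (by nlinarith)

theorem stmt10_general (a b ζ₀ : ℝ) (hζ₀ : 0 < ζ₀)
    (hdef : Real.sqrt (1 + ζ₀ ^ 2) + ζ₀ ^ 2 / Real.sqrt (1 + ζ₀ ^ 2)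
        = Real.sqrt (a ^ 2 + b ^ 2))
    (hsmall : |b| * Real.sin (ζ₀ / (5 * Real.sqrt (1 + ζ₀ ^ 2)))
        + |Real.sqrt (a ^ 2 + b ^ 2) - a|
        ≤ (1 / 100) * ζ₀ ^ 2 / Real.sqrt (1 + ζ₀ ^ 2))
    (haup : a ≤ 3 * Real.sqrt (1 + ζ₀ ^ 2)) :
    ∀ ρ θ α : ℝ, ρ ∈ Set.Icc 0 ((6 / 5) * ζ₀) →
      θ ∈ Set.Icc 0 (ζ₀ / (5 * Real.sqrt (1 + ζ₀ ^ 2))) →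
      α ∈ Set.Icc 0 (2 * π) →
      -(Real.sqrt (1 + ρ ^ 2) - a * Real.cos θ - b * Real.sin θ * Real.cos α)
          ≥ (1 / 2) * ζ₀ ^ 2 / Real.sqrt (1 + ζ₀ ^ 2) ∧
      1 / (Real.sqrt (1 + ρ ^ 2) - a * Real.cos θ - b * Real.sin θ * Real.cos α) ^ 2
          ≤ 4 * (1 + ζ₀ ^ 2) / ζ₀ ^ 4 := by
  rintro ρ θ α ⟨hρ0, hρ⟩ ⟨hθ0, hθR⟩ -
  have hR : ζ₀ / (5 * √(1 + ζ₀ ^ 2)) ≤ π / 2 :=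
    (div_five_mul_sqrt_one_add_sq_le ζ₀).trans (by linarith [pi_gt_three])
  have hbsin := abs_mul_sin_mul_cos_le (b := b) (α := α) hθ0 hθR hR
  have hsinR := sin_nonneg_of_nonneg_of_le_pi (hθ0.trans hθR) (by linarith [pi_pos])
  have hsqrt := sqrt_one_add_sq_le_of_sq_le (ρ := ρ) (ζ := ζ₀) (c := 11 / 50) (by norm_num)
    (by nlinarith)
  have haR := mul_div_five_mul_sqrt_one_add_sq_sq_le haup
  set s := √(1 + ζ₀ ^ 2)
  set R := ζ₀ / (5 * s)
  set κ := ζ₀ ^ 2 / s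
  have hs : 0 < s := sqrt_pos.mpr (by positivity)
  have hκ : 0 < κ := by positivity
  have hsmall_κ : |b| * sin R + |√(a ^ 2 + b ^ 2) - a| ≤ κ / 100 := by
    convert hsmall using 1; ring
  have ha_ge : s + κ - κ / 100 ≤ a := by
    linarith [le_abs_self (√(a ^ 2 + b ^ 2) - a), mul_nonneg (abs_nonneg b) hsinR]
  have hcos := sub_mul_sq_div_two_le_mul_cos (a := a) (by linarith)
    (abs_le.mpr ⟨by linarith, hθR⟩)
  have hG : κ / 2 ≤ -(√(1 + ρ ^ 2) - a * cos θ - b * sin θ * cos α) := by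
    linarith [neg_abs_le (b * sin θ * cos α), abs_nonneg (√(a ^ 2 + b ^ 2) - a)]
  have hhalf : 1 / 2 * ζ₀ ^ 2 / s = κ / 2 := by ring
  refine ⟨hhalf ▸ hG, ?_⟩
  calc _ ≤ 1 / (κ / 2) ^ 2 := one_div_sq_le_of_le_neg (by positivity) hG
    _ = 4 * s ^ 2 / ζ₀ ^ 4 := by simp only [κ]; field_simp; ring
    _ = 4 * (1 + ζ₀ ^ 2) / ζ₀ ^ 4 := by rw [sq_sqrt (by positivity)]

/-- Lower bound on `-G` near the critical point, statement (b) of Lemma on `G_{a,b}`. -/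
theorem stmt10 (a b ζ₀ : ℝ) (ha : 1 < a) (hζ₀ : 0 < ζ₀)
    (hdef : Real.sqrt (1 + ζ₀ ^ 2) + ζ₀ ^ 2 / Real.sqrt (1 + ζ₀ ^ 2)
        = Real.sqrt (a ^ 2 + b ^ 2))
    (hsmall : |b| * Real.sin (ζ₀ / (5 * Real.sqrt (1 + ζ₀ ^ 2)))
        + |Real.sqrt (a ^ 2 + b ^ 2) - a|
        ≤ (1 / 100) * ζ₀ ^ 2 / Real.sqrt (1 + ζ₀ ^ 2))
    (haup : a ≤ 3 * Real.sqrt (1 + ζ₀ ^ 2)) :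
    ∀ ρ θ α : ℝ, ρ ∈ Set.Icc 0 ((6 / 5) * ζ₀) →
      θ ∈ Set.Icc 0 (ζ₀ / (5 * Real.sqrt (1 + ζ₀ ^ 2))) →
      α ∈ Set.Icc 0 (2 * π) →
      -(Real.sqrt (1 + ρ ^ 2) - a * Real.cos θ - b * Real.sin θ * Real.cos α)
          ≥ (1 / 2) * ζ₀ ^ 2 / Real.sqrt (1 + ζ₀ ^ 2) ∧
      1 / (Real.sqrt (1 + ρ ^ 2) - a * Real.cos θ - b * Real.sin θ * Real.cos α) ^ 2
          ≤ 4 * (1 + ζ₀ ^ 2) / ζ₀ ^ 4 :=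
  stmt10_general a b ζ₀ hζ₀ hdef hsmall haup
end
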